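/- Let A ∈ ℝ, let J(z) be the 5×5 matrix with rows (0, 0, 0, 2z₁, 12z₄), (0, 0, 1, 0, 0), (0, −1, 0, 0, −2z₁), (−2z₁, 0, 0, 0, −8z₁z₂ + 2z₅), (−12z₄, 0, 2z₁, 8z₁z₂ − 2z₅, 0), and let F₁(z) = (1/2)A z₁ + (1/6) z₅ + 8A z₂² + (1/2) z₃² + (2/3) z₁ z₂ + (16/3) z₂³. Then for all z ∈ ℝ⁵, J(z)·∇F₁(z) equals the vector field of system (8), namely (2z₄, z₃, −z₁ − 16A z₂ − 16 z₂², −A z₁ + (1/3) z₅ − (8/3) z₁ z₂, −6A z₄ + 2 z₁ z₃ − 8 z₂ z₄). Hence system (8) is the Hamiltonian system ż = J ∇F₁. -/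

import Mathlib

/-- The Poisson matrix of the five-dimensional system (8). Coordinates:
z 0 = z₁, z 1 = z₂, z 2 = z₃, z 3 = z₄, z 4 = z₅. -/
def poissonJ (z : Fin 5 → ℝ) : Matrix (Fin 5) (Fin 5) ℝ :=
  !![0, 0, 0, 2 * z 0, 12 * z 3;
     0, 0, 1, 0, 0;
     0, -1, 0, 0, -2 * z 0;
     -2 * z 0, 0, 0, 0, -8 * z 0 * z 1 + 2 * z 4;
     -12 * z 3, 0, 2 * z 0, 8 * z 0 * z 1 - 2 * z 4, 0]

/-- Gradient of a scalar function on ℝ⁵. -/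
noncomputable def grad5 (F : (Fin 5 → ℝ) → ℝ) (z : Fin 5 → ℝ) : Fin 5 → ℝ :=
  fun i => fderiv ℝ F z (Pi.single i 1)

/-- The Hamiltonian F₁ of the five-dimensional system (8). -/
noncomputable def F₁ (A : ℝ) (z : Fin 5 → ℝ) : ℝ :=
  (1/2) * A * z 0 + (1/6) * z 4 + 8 * A * (z 1)^2 + (1/2) * (z 2)^2
    + (2/3) * z 0 * z 1 + (16/3) * (z 1)^3

lemma grad5_eq_of_hasFDerivAt {F : (Fin 5 → ℝ) → ℝ} {z g : Fin 5 → ℝ}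
    (hF : HasFDerivAt F (∑ i, g i • (ContinuousLinearMap.proj i : (Fin 5 → ℝ) →L[ℝ] ℝ)) z) :
    grad5 F z = g := by
  funext i
  simp [grad5, hF.fderiv, Pi.single_apply]

lemma hasFDerivAt_F₁ (A : ℝ) (z : Fin 5 → ℝ) :
    HasFDerivAt (F₁ A)
      (∑ i, ![(1/2) * A + (2/3) * z 1, 16 * A * z 1 + (2/3) * z 0 + 16 * (z 1)^2, z 2, 0, 1/6] i
        • (ContinuousLinearMap.proj i : (Fin 5 → ℝ) →L[ℝ] ℝ)) z := by
  have hcoord (i : Fin 5) : HasFDerivAt (fun w : Fin 5 → ℝ => w i)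
      (ContinuousLinearMap.proj i : (Fin 5 → ℝ) →L[ℝ] ℝ) z :=
    hasFDerivAt_apply i z
  have hF := ((((((hcoord 0).const_mul ((1/2) * A)).add ((hcoord 4).const_mul (1/6))).add
      (((hcoord 1).pow 2).const_mul (8 * A))).add (((hcoord 2).pow 2).const_mul (1/2))).add
      (((hcoord 0).const_mul (2/3)).mul (hcoord 1))).add (((hcoord 1).pow 3).const_mul (16/3))
  refine hF.congr_fderiv ?_
  ext v
  simp only [Fin.sum_univ_five, add_apply, smul_apply,
    ContinuousLinearMap.proj_apply, smul_eq_mul, nsmul_eq_mul, Matrix.cons_val, Fin.isValue]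
  ring

theorem system8_is_hamiltonian (A : ℝ) (z : Fin 5 → ℝ) :
    (poissonJ z).mulVec (grad5 (F₁ A) z) =
      ![2 * z 3,
        z 2,
        -z 0 - 16 * A * z 1 - 16 * (z 1)^2,
        -A * z 0 + (1/3) * z 4 - (8/3) * z 0 * z 1,
        -(6 * A) * z 3 + 2 * z 0 * z 2 - 8 * z 1 * z 3] := by
  rw [grad5_eq_of_hasFDerivAt (hasFDerivAt_F₁ A z)]
  ext i
  fin_cases i <;>
    simp only [poissonJ, Matrix.mulVec, dotProduct, Fin.sum_univ_five, Matrix.of_apply,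
      Matrix.cons_val, Fin.isValue, Fin.reduceFinMk] <;> ring
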